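/- arXiv:1303.4795 — 3 statements merged into one kernel-verified Lean document; each statement's English description precedes it below -/
import Mathlib

section
/- Under the hypotheses of the previous abstract setting (μ₀ a probability measure on X with the Gaussian small-ball ratio property at z, Φ locally Lipschitz, μ defined by dμ/dμ₀ ∝ exp(−Φ), Z = ∫_X exp(−Φ)dμ₀), for any z with ‖z‖_E < ∞ we have lim_{δ→0} μ(B(z,δ))/μ₀(B(0,δ)) = Z⁻¹ exp(−I(z)) where I(z) = Φ(z) + ½‖z‖_E², assuming lim_{δ→0} μ₀(B(z,δ))/μ₀(B(0,δ)) = exp(−½‖z‖_E²). -/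
open MeasureTheory Metric Real Filter
open scoped Topology ENNReal

/-!
On the ball `B(z, δ)` the potential `Φ` is within `K δ` of `Φ z`, so the density
`exp(-Φ)/Z` of `μ` is squeezed between `exp(-Φ z ∓ K δ)/Z`. Hence `μ(B(z, δ))` lies
between these multiples of `μ₀(B(z, δ))`, and dividing by `μ₀(B(0, δ))` and letting
`δ → 0` the small-ball ratio hypothesis gives the limit.
-/

lemma exists_abs_sub_le_mul_dist_of_mem_ball {X : Type*} [SeminormedAddCommGroup X]
    {Φ : X → ℝ} {L : ℝ → ℝ}
    (hLip : ∀ r > 0, ∀ u v : X, ‖u‖ < r → ‖v‖ < r → |Φ u - Φ v| ≤ L r * ‖u - v‖) (z : X) :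
    ∃ K, 0 ≤ K ∧ ∀ u ∈ ball z 1, |Φ u - Φ z| ≤ K * dist u z := by
  refine ⟨max (L (‖z‖ + 1)) 0, le_max_right _ _, fun u hu => ?_⟩
  rw [mem_ball, dist_eq_norm] at hu
  have hu' : ‖u‖ < ‖z‖ + 1 := by
    linarith [norm_le_norm_add_norm_sub' u z, norm_sub_rev u z]
  calc |Φ u - Φ z| ≤ L (‖z‖ + 1) * ‖u - z‖ :=
        hLip _ (by positivity) u z hu' (lt_add_one _)
    _ ≤ max (L (‖z‖ + 1)) 0 * dist u z := by
        rw [dist_eq_norm]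
        exact mul_le_mul_of_nonneg_right (le_max_left _ _) (norm_nonneg _)

lemma toReal_withDensity_ofReal_mem_Icc {X : Type*} [MeasurableSpace X] (μ₀ : Measure X)
    {f : X → ℝ} {s : Set X} (hs : MeasurableSet s) (hs' : μ₀ s ≠ ∞) {a b : ℝ}
    (ha : 0 ≤ a) (hf : ∀ u ∈ s, a ≤ f u ∧ f u ≤ b) :
    (μ₀.withDensity (fun u => ENNReal.ofReal (f u)) s).toReal ∈
      Set.Icc (a * (μ₀ s).toReal) (b * (μ₀ s).toReal) := by
  rcases s.eq_empty_or_nonempty with rfl | ⟨u₀, hu₀⟩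
  · simp
  have hb : 0 ≤ b := ha.trans ((hf u₀ hu₀).1.trans (hf u₀ hu₀).2)
  rw [withDensity_apply _ hs]
  have hup : ∫⁻ u in s, ENNReal.ofReal (f u) ∂μ₀ ≤ ENNReal.ofReal b * μ₀ s := by
    rw [← setLIntegral_const]
    exact setLIntegral_mono' hs fun u hu => ENNReal.ofReal_le_ofReal (hf u hu).2
  have hlo : ENNReal.ofReal a * μ₀ s ≤ ∫⁻ u in s, ENNReal.ofReal (f u) ∂μ₀ := by
    rw [← setLIntegral_const]
    exact setLIntegral_mono' hs fun u hu => ENNReal.ofReal_le_ofReal (hf u hu).1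
  have hfin : ENNReal.ofReal b * μ₀ s ≠ ∞ := ENNReal.mul_ne_top ENNReal.ofReal_ne_top hs'
  constructor
  · simpa [ENNReal.toReal_mul, ha] using ENNReal.toReal_mono (ne_top_of_le_ne_top hfin hup) hlo
  · simpa [ENNReal.toReal_mul, hb] using ENNReal.toReal_mono hfin hup

lemma tendsto_div_of_mem_Icc_mul {α : Type*} {l : Filter α} {f g h a b : α → ℝ} {c ℓ : ℝ}
    (ha : Tendsto a l (𝓝 c)) (hb : Tendsto b l (𝓝 c))
    (hg : Tendsto (fun x => g x / h x) l (𝓝 ℓ)) (hh : ∀ᶠ x in l, 0 ≤ h x)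
    (hf : ∀ᶠ x in l, f x ∈ Set.Icc (a x * g x) (b x * g x)) :
    Tendsto (fun x => f x / h x) l (𝓝 (c * ℓ)) := by
  refine tendsto_of_tendsto_of_tendsto_of_le_of_le' (ha.mul hg) (hb.mul hg) ?_ ?_
  · filter_upwards [hh, hf] with x hx hfx
    rw [← mul_div_assoc]
    exact div_le_div_of_nonneg_right hfx.1 hx
  · filter_upwards [hh, hf] with x hx hfx
    rw [← mul_div_assoc]
    exact div_le_div_of_nonneg_right hfx.2 hx

theorem stmt5_general {X : Type*} [NormedAddCommGroup X] [MeasurableSpace X] [BorelSpace X]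
    (μ₀ : Measure X) [IsProbabilityMeasure μ₀]
    (nE : X → ℝ≥0∞) (Φ : X → ℝ) (L : ℝ → ℝ)
    (hLip : ∀ r > 0, ∀ u v : X, ‖u‖ < r → ‖v‖ < r → |Φ u - Φ v| ≤ L r * ‖u - v‖)
    (z : X)
    (Z : ℝ) (hZpos : 0 < Z)
    (μ : Measure X)
    (hμ : μ = μ₀.withDensity (fun u => ENNReal.ofReal (exp (-Φ u) / Z)))
    (hsmall : Tendsto
      (fun δ : ℝ => (μ₀ (ball z δ)).toReal / (μ₀ (ball (0 : X) δ)).toReal)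
      (𝓝[>] 0) (𝓝 (exp (-((nE z).toReal ^ 2 / 2))))) :
    Tendsto (fun δ : ℝ => (μ (ball z δ)).toReal / (μ₀ (ball (0 : X) δ)).toReal)
      (𝓝[>] 0) (𝓝 (Z⁻¹ * exp (-(Φ z + (nE z).toReal ^ 2 / 2)))) := by
  obtain ⟨K, hK, hΦ⟩ := exists_abs_sub_le_mul_dist_of_mem_ball hLip z
  have hdensity : ∀ δ ∈ Set.Ioo (0 : ℝ) 1, ∀ u ∈ ball z δ,
      exp (-Φ z + -K * δ) / Z ≤ exp (-Φ u) / Z ∧ exp (-Φ u) / Z ≤ exp (-Φ z + K * δ) / Z := by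
    intro δ hδ u hu
    have hKδ : K * dist u z ≤ K * δ := mul_le_mul_of_nonneg_left (le_of_lt hu) hK
    have := abs_le.1 ((hΦ u (ball_subset_ball hδ.2.le hu)).trans hKδ)
    constructor <;> gcongr <;> linarith
  have hexp : ∀ s : ℝ, Tendsto (fun δ => exp (-Φ z + s * δ) / Z) (𝓝[>] 0) (𝓝 (exp (-Φ z) / Z)) :=
    fun s => tendsto_nhdsWithin_of_tendsto_nhds (Continuous.tendsto' (by fun_prop) 0 _ (by simp))
  have hlim : Z⁻¹ * exp (-(Φ z + (nE z).toReal ^ 2 / 2)) =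
      exp (-Φ z) / Z * exp (-((nE z).toReal ^ 2 / 2)) := by
    rw [neg_add, exp_add]; ring
  rw [hlim, hμ]
  refine tendsto_div_of_mem_Icc_mul (hexp (-K)) (hexp K) hsmall
    (Eventually.of_forall fun _ => ENNReal.toReal_nonneg) ?_
  filter_upwards [Ioo_mem_nhdsGT (zero_lt_one' ℝ)] with δ hδ
  exact toReal_withDensity_ofReal_mem_Icc μ₀ measurableSet_ball (measure_ne_top _ _)
    (by positivity) (hdensity δ hδ)

/-- Corollary 3.3, abstract form: with μ₀ a probability measure on a separable
Banach space having the Gaussian small-ball ratio property at z (with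
extended-real Cameron–Martin norm nE, finite at z), Φ locally Lipschitz,
Z = ∫ exp(−Φ) dμ₀ and dμ/dμ₀ = exp(−Φ)/Z, we have
μ(B(z,δ))/μ₀(B(0,δ)) → Z⁻¹ exp(−I(z)) as δ → 0⁺, where I(z) = Φ(z) + ½‖z‖_E². -/
theorem stmt5 {X : Type*} [NormedAddCommGroup X] [NormedSpace ℝ X]
    [TopologicalSpace.SeparableSpace X] [MeasurableSpace X] [BorelSpace X]
    (μ₀ : Measure X) [IsProbabilityMeasure μ₀]
    (nE : X → ℝ≥0∞) (Φ : X → ℝ) (L : ℝ → ℝ)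
    (hLip : ∀ r > 0, ∀ u v : X, ‖u‖ < r → ‖v‖ < r → |Φ u - Φ v| ≤ L r * ‖u - v‖)
    (z : X) (hz : nE z ≠ ∞)
    (Z : ℝ) (hZdef : Z = ∫ u, exp (-Φ u) ∂μ₀) (hZpos : 0 < Z)
    (μ : Measure X)
    (hμ : μ = μ₀.withDensity (fun u => ENNReal.ofReal (exp (-Φ u) / Z)))
    (hsmall : Tendsto
      (fun δ : ℝ => (μ₀ (ball z δ)).toReal / (μ₀ (ball (0 : X) δ)).toReal)
      (𝓝[>] 0) (𝓝 (exp (-((nE z).toReal ^ 2 / 2))))) :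
    Tendsto (fun δ : ℝ => (μ (ball z δ)).toReal / (μ₀ (ball (0 : X) δ)).toReal)
      (𝓝[>] 0) (𝓝 (Z⁻¹ * exp (-(Φ z + (nE z).toReal ^ 2 / 2)))) :=
  stmt5_general μ₀ nE Φ L hLip z Z hZpos μ hμ hsmall
end

section
/- Let E be a Hilbert space dense in a Banach space X, let 𝒢 : X → ℝᴷ be Lipschitz on bounded sets, and u† ∈ X. Let yⱼ = 𝒢(u†) + ηⱼ with i.i.d. centered noise satisfying E|C₁^{-1/2}η₁|² = K < ∞, and uₙ a minimizer over E of Iₙ(u) = ‖u‖_E² + Σ_{j=1}^{n}|yⱼ − 𝒢(u)|²_{C₁}. Then lim_{n→∞} E|𝒢(u†) − 𝒢(uₙ)|²_{C₁} = 0, and hence some subsequence of 𝒢(uₙ) converges to 𝒢(u†) almost surely. -/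
/-!
Compare the minimiser `uₙ` with an arbitrary competitor `v ∈ E`. After expanding the squares the
noise enters only through `Aₙ = ∑_{j<n} S ηⱼ`, and absorbing the cross term `⟪Aₙ, ·⟫` by Young's
inequality gives `‖S(𝒢u† − 𝒢uₙ)‖² ≤ 2‖v‖²/n + 3‖S(𝒢u† − 𝒢v)‖² + 8‖Aₙ‖²/n²` pointwise.
Independence and centring give `E‖Aₙ‖² = nK`, so the expected misfit is eventually at most
`3‖S(𝒢u† − 𝒢v)‖² + o(1)`, which is arbitrarily small since `E` is dense in `X` and `𝒢` is
continuous. Convergence in `L¹` gives an almost surely convergent subsequence, and `S` is invertible.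
-/

open MeasureTheory Filter ProbabilityTheory
open scoped Topology
open Finset RealInnerProductSpace

lemma tendsto_zero_of_tendsto_norm_sq {α F : Type*} [SeminormedAddCommGroup F] {l : Filter α}
    {f : α → F} (h : Tendsto (fun x => ‖f x‖ ^ 2) l (𝓝 0)) : Tendsto f l (𝓝 0) := by
  rw [tendsto_zero_iff_norm_tendsto_zero]
  simpa [Function.comp_def, Real.sqrt_sq_eq_abs] using (Real.continuous_sqrt.tendsto 0).comp h

theorem continuous_of_forall_lipschitz_on_closedBall {X Y : Type*} [SeminormedAddCommGroup X]
    [SeminormedAddCommGroup Y] {G : X → Y}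
    (h : ∀ r > 0, ∃ L > 0, ∀ u v : X, ‖u‖ ≤ r → ‖v‖ ≤ r → ‖G u - G v‖ ≤ L * ‖u - v‖) :
    Continuous G := by
  refine continuous_iff_continuousAt.2 fun x => ?_
  obtain ⟨L, -, hL⟩ := h (‖x‖ + 1) (by positivity)
  refine continuousAt_of_locally_lipschitz one_pos L fun y hy => ?_
  rw [dist_eq_norm] at hy
  simp only [dist_eq_norm]
  exact hL y x (by linarith [norm_le_insert' y x]) (by linarith)

theorem tendsto_zero_of_forall_le_div_add {E X : Type*} [TopologicalSpace X] {ι : E → X}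
    (hι : DenseRange ι) {x₀ : X} {q : X → ℝ} (hq : Tendsto q (𝓝 x₀) (𝓝 0)) {I : ℕ → ℝ}
    (hI : ∀ n, 0 ≤ I n) (C : E → ℝ) (hle : ∀ v n, 0 < n → I n ≤ C v / n + q (ι v)) :
    Tendsto I atTop (𝓝 0) := by
  refine tendsto_order.2 ⟨fun a ha => Eventually.of_forall fun n => ha.trans_le (hI n),
    fun ε hε => ?_⟩
  obtain ⟨_, ⟨v, rfl⟩, hv⟩ := hι.inter_nhds_nonempty (hq.eventually (gt_mem_nhds (half_pos hε)))
  have hC : Tendsto (fun n : ℕ => C v / n) atTop (𝓝 0) := tendsto_const_div_atTop_nhds_zero_nat _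
  filter_upwards [hC.eventually (gt_mem_nhds (half_pos hε)), eventually_gt_atTop 0] with n hn hn0
  linarith [hle v n hn0, show q (ι v) < ε / 2 from hv]

section Hilbert

variable {H : Type*} [NormedAddCommGroup H] [InnerProductSpace ℝ H]

lemma sum_norm_add_sq {ι : Type*} (s : Finset ι) (a : ι → H) (c : H) :
    ∑ j ∈ s, ‖a j + c‖ ^ 2 = ∑ j ∈ s, ‖a j‖ ^ 2 + 2 * ⟪∑ j ∈ s, a j, c⟫ + #s * ‖c‖ ^ 2 := by
  simp only [norm_add_sq_real, Finset.sum_add_distrib, ← Finset.mul_sum, sum_inner,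
    Finset.sum_const, nsmul_eq_mul]

lemma norm_sq_le_of_sum_norm_add_sq_le {n : ℕ} (hn : 0 < n) {a : ℕ → H} {b c : H} {r s : ℝ}
    (hr : 0 ≤ r)
    (h : r + ∑ j ∈ range n, ‖a j + b‖ ^ 2 ≤ s + ∑ j ∈ range n, ‖a j + c‖ ^ 2) :
    ‖b‖ ^ 2 ≤ 2 * s / n + 3 * ‖c‖ ^ 2 + 8 * ‖∑ j ∈ range n, a j‖ ^ 2 / n ^ 2 := by
  set A := ∑ j ∈ range n, a j
  rw [sum_norm_add_sq, sum_norm_add_sq, card_range] at h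
  have hn' : (0 : ℝ) < n := Nat.cast_pos.2 hn
  have hinner : ⟪A, c⟫ - ⟪A, b⟫ ≤ ‖A‖ * (‖b‖ + ‖c‖) := by
    rw [← inner_sub_right]
    exact (real_inner_le_norm A (c - b)).trans
      (mul_le_mul_of_nonneg_left ((norm_sub_le c b).trans_eq (add_comm _ _)) (norm_nonneg A))
  -- Young: `2n‖A‖(‖b‖ + ‖c‖) ≤ 4‖A‖² + n²(‖b‖ + ‖c‖)²/4`.
  have key : (n : ℝ) ^ 2 * ‖b‖ ^ 2 ≤ 2 * n * s + 3 * n ^ 2 * ‖c‖ ^ 2 + 8 * ‖A‖ ^ 2 := by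
    nlinarith [sq_nonneg (2 * ‖A‖ - n / 2 * (‖b‖ + ‖c‖)), sq_nonneg (n * (‖b‖ - ‖c‖)),
      mul_le_mul_of_nonneg_left hinner hn'.le]
  have hrhs : 2 * s / n + 3 * ‖c‖ ^ 2 + 8 * ‖A‖ ^ 2 / n ^ 2
      = (2 * n * s + 3 * n ^ 2 * ‖c‖ ^ 2 + 8 * ‖A‖ ^ 2) / n ^ 2 := by
    field_simp
  rw [hrhs, le_div_iff₀ (by positivity), mul_comm]
  exact key

end Hilbert

section Probability

variable {Ω : Type*} [MeasurableSpace Ω] {P : Measure Ω}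

lemma integral_sq_sum_of_indepFun [IsFiniteMeasure P] {ι : Type*} {X : ι → Ω → ℝ}
    {s : Finset ι} (hX : ∀ i ∈ s, MemLp (X i) 2 P) (hcent : ∀ i ∈ s, ∫ ω, X i ω ∂P = 0)
    (hindep : Set.Pairwise ↑s fun i j => X i ⟂ᵢ[P] X j) :
    ∫ ω, (∑ i ∈ s, X i ω) ^ 2 ∂P = ∑ i ∈ s, ∫ ω, X i ω ^ 2 ∂P := by
  have hsum : ∫ ω, (∑ i ∈ s, X i) ω ∂P = 0 := by
    simp only [Finset.sum_apply]
    rw [integral_finsetSum s fun i hi => (hX i hi).integrable one_le_two]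
    exact Finset.sum_eq_zero hcent
  have hvar := IndepFun.variance_sum hX hindep
  rw [variance_of_integral_eq_zero (memLp_finsetSum' s hX).aestronglyMeasurable.aemeasurable hsum,
    Finset.sum_congr rfl fun i hi => variance_of_integral_eq_zero
      (hX i hi).aestronglyMeasurable.aemeasurable (hcent i hi)] at hvar
  simpa only [Finset.sum_apply] using hvar

variable {H : Type*} [NormedAddCommGroup H] [InnerProductSpace ℝ H] [FiniteDimensional ℝ H]
  [MeasurableSpace H] [BorelSpace H]

lemma integral_norm_sq_sum_of_iIndepFun [IsFiniteMeasure P] {ξ : ℕ → Ω → H}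
    (hindep : iIndepFun ξ P) (hL2 : ∀ j, MemLp (ξ j) 2 P) (hcent : ∀ j, ∫ ω, ξ j ω ∂P = 0)
    (s : Finset ℕ) :
    ∫ ω, ‖∑ j ∈ s, ξ j ω‖ ^ 2 ∂P = ∑ j ∈ s, ∫ ω, ‖ξ j ω‖ ^ 2 ∂P := by
  let b := stdOrthonormalBasis ℝ H
  have hnorm (x : H) : ‖x‖ ^ 2 = ∑ k, ⟪b k, x⟫ ^ 2 := by
    simp [← b.sum_sq_norm_inner_right x]
  have hcoord (k) (j) : MemLp (fun ω => ⟪b k, ξ j ω⟫) 2 P := (hL2 j).const_inner (b k)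
  have hcoord_cent (k) (j) : ∫ ω, ⟪b k, ξ j ω⟫ ∂P = 0 := by
    rw [integral_inner ((hL2 j).integrable one_le_two), hcent, inner_zero_right]
  have hcoord_indep (k) : Set.Pairwise ↑s fun i j =>
      (fun ω => ⟪b k, ξ i ω⟫) ⟂ᵢ[P] fun ω => ⟪b k, ξ j ω⟫ := fun i _ j _ hij =>
    (hindep.indepFun hij).comp (by fun_prop) (by fun_prop)
  calc ∫ ω, ‖∑ j ∈ s, ξ j ω‖ ^ 2 ∂P
      = ∫ ω, ∑ k, (∑ j ∈ s, ⟪b k, ξ j ω⟫) ^ 2 ∂P := by simp_rw [hnorm, inner_sum]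
    _ = ∑ k, ∑ j ∈ s, ∫ ω, ⟪b k, ξ j ω⟫ ^ 2 ∂P := by
      rw [integral_finsetSum _ fun k _ => (memLp_finsetSum s fun j _ => hcoord k j).integrable_sq]
      exact Finset.sum_congr rfl fun k _ => integral_sq_sum_of_indepFun (fun j _ => hcoord k j)
        (fun j _ => hcoord_cent k j) (hcoord_indep k)
    _ = ∑ j ∈ s, ∫ ω, ‖ξ j ω‖ ^ 2 ∂P := by
      rw [Finset.sum_comm]
      refine Finset.sum_congr rfl fun j _ => ?_
      rw [← integral_finsetSum _ fun k _ => (hcoord k j).integrable_sq]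
      simp_rw [hnorm]

theorem integral_norm_sq_le_of_minimizes [IsProbabilityMeasure P] {E : Type*} [Norm E]
    {ξ : ℕ → Ω → H} (hindep : iIndepFun ξ P) (hL2 : ∀ j, MemLp (ξ j) 2 P)
    (hcent : ∀ j, ∫ ω, ξ j ω ∂P = 0) {Kc : ℝ} (hKc : ∀ j, ∫ ω, ‖ξ j ω‖ ^ 2 ∂P = Kc)
    {F : E → H} {n : ℕ} (hn : 0 < n) {u : Ω → E}
    (hmin : ∀ ω w, ‖u ω‖ ^ 2 + ∑ j ∈ range n, ‖ξ j ω + F (u ω)‖ ^ 2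
      ≤ ‖w‖ ^ 2 + ∑ j ∈ range n, ‖ξ j ω + F w‖ ^ 2)
    (hint : Integrable (fun ω => ‖F (u ω)‖ ^ 2) P) (v : E) :
    ∫ ω, ‖F (u ω)‖ ^ 2 ∂P ≤ (2 * ‖v‖ ^ 2 + 8 * Kc) / n + 3 * ‖F v‖ ^ 2 := by
  have hsum_int : Integrable (fun ω => ‖∑ j ∈ range n, ξ j ω‖ ^ 2) P :=
    (memLp_finsetSum _ fun j _ => hL2 j).integrable_norm_pow two_ne_zero
  have hsum_sq : ∫ ω, ‖∑ j ∈ range n, ξ j ω‖ ^ 2 ∂P = n * Kc := by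
    simp [integral_norm_sq_sum_of_iIndepFun hindep hL2 hcent, hKc]
  calc ∫ ω, ‖F (u ω)‖ ^ 2 ∂P
      ≤ ∫ ω, 2 * ‖v‖ ^ 2 / n + 3 * ‖F v‖ ^ 2 + 8 * ‖∑ j ∈ range n, ξ j ω‖ ^ 2 / n ^ 2 ∂P :=
        integral_mono hint ((integrable_const _).add ((hsum_int.const_mul 8).div_const _))
          fun ω => norm_sq_le_of_sum_norm_add_sq_le hn (by positivity) (hmin ω v)
    _ = (2 * ‖v‖ ^ 2 + 8 * Kc) / n + 3 * ‖F v‖ ^ 2 := by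
        rw [integral_add (integrable_const _) ((hsum_int.const_mul 8).div_const _),
          integral_const, integral_div, integral_const_mul, hsum_sq]
        have hn' : (n : ℝ) ≠ 0 := by positivity
        simp only [probReal_univ, one_smul]
        field_simp
        ring

lemma exists_strictMono_ae_tendsto_zero_of_tendsto_integral {f : ℕ → Ω → ℝ}
    (hf : ∀ n, Integrable (f n) P) (hf0 : ∀ n ω, 0 ≤ f n ω)
    (h : Tendsto (fun n => ∫ ω, f n ω ∂P) atTop (𝓝 0)) :
    ∃ φ : ℕ → ℕ, StrictMono φ ∧ ∀ᵐ ω ∂P, Tendsto (fun k => f (φ k) ω) atTop (𝓝 0) := by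
  have hL1 (n) : eLpNorm (f n - 0) 1 P = ENNReal.ofReal (∫ ω, f n ω ∂P) := by
    rw [sub_zero, eLpNorm_one_eq_lintegral_enorm, ← ofReal_integral_norm_eq_lintegral_enorm (hf n)]
    simp_rw [Real.norm_of_nonneg (hf0 n _)]
  have hmeas : TendstoInMeasure P f atTop 0 := by
    refine tendstoInMeasure_of_tendsto_eLpNorm one_ne_zero (fun n => (hf n).aestronglyMeasurable)
      aestronglyMeasurable_zero ?_
    simpa only [hL1, ENNReal.ofReal_zero] using ENNReal.tendsto_ofReal h
  exact hmeas.exists_seq_tendsto_ae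

end Probability

theorem stmt12_general {E X : Type*} [NormedAddCommGroup E] [InnerProductSpace ℝ E]
    [NormedAddCommGroup X] [NormedSpace ℝ X]
    (ι : E →L[ℝ] X) (hdense : DenseRange ι)
    {K : ℕ} (G : X → EuclideanSpace ℝ (Fin K))
    (hGlip : ∀ r > 0, ∃ L > 0, ∀ u v : X, ‖u‖ ≤ r → ‖v‖ ≤ r →
      ‖G u - G v‖ ≤ L * ‖u - v‖)
    (S : EuclideanSpace ℝ (Fin K) →L[ℝ] EuclideanSpace ℝ (Fin K))
    (hS : Function.Bijective S)
    {Ω : Type*} [MeasurableSpace Ω] (P : Measure Ω) [IsProbabilityMeasure P]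
    (η : ℕ → Ω → EuclideanSpace ℝ (Fin K))
    (hηmeas : ∀ j, Measurable (η j))
    (hindep : iIndepFun η P)
    (hcent : ∀ j, (∫ ω, η j ω ∂P) = 0)
    (Kc : ℝ)
    (hKint : ∀ j, Integrable (fun ω => ‖S (η j ω)‖^2) P)
    (hKc : ∀ j, (∫ ω, ‖S (η j ω)‖^2 ∂P) = Kc)
    (udag : X) (u : ℕ → Ω → E)
    (hmin : ∀ n ω, ∀ w : E,
      ‖u n ω‖^2 + ∑ j ∈ Finset.range n, ‖S (G udag + η j ω - G (ι (u n ω)))‖^2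
        ≤ ‖w‖^2 + ∑ j ∈ Finset.range n, ‖S (G udag + η j ω - G (ι w))‖^2)
    (hGint : ∀ n, Integrable (fun ω => ‖S (G udag - G (ι (u n ω)))‖^2) P) :
    Tendsto (fun n => ∫ ω, ‖S (G udag - G (ι (u n ω)))‖^2 ∂P) atTop (𝓝 0) ∧
    ∃ φ : ℕ → ℕ, StrictMono φ ∧
      ∀ᵐ ω ∂P, Tendsto (fun k => G (ι (u (φ k) ω))) atTop (𝓝 (G udag)) := by
  obtain ⟨Se, hSe⟩ : ∃ Se : EuclideanSpace ℝ (Fin K) ≃L[ℝ] EuclideanSpace ℝ (Fin K),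
      ∀ x, Se x = S x :=
    ⟨(LinearEquiv.ofBijective (S : _ →ₗ[ℝ] _) hS).toContinuousLinearEquiv, fun _ => rfl⟩
  have hL2 (j) : MemLp (fun ω => S (η j ω)) 2 P :=
    (memLp_two_iff_integrable_sq_norm
      (S.continuous.measurable.comp (hηmeas j)).aestronglyMeasurable).2 (hKint j)
  have hcentS (j) : ∫ ω, S (η j ω) ∂P = 0 := by
    simp only [← hSe, Se.integral_comp_comm, hcent, map_zero]
  have hindepS : iIndepFun (fun j ω => S (η j ω)) P :=
    hindep.comp _ fun _ => S.continuous.measurable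
  have hmin_split (n ω) (w : E) :
      ‖u n ω‖ ^ 2 + ∑ j ∈ range n, ‖S (η j ω) + S (G udag - G (ι (u n ω)))‖ ^ 2
        ≤ ‖w‖ ^ 2 + ∑ j ∈ range n, ‖S (η j ω) + S (G udag - G (ι w))‖ ^ 2 := by
    have hsplit (j : ℕ) (x : X) : G udag + η j ω - G x = η j ω + (G udag - G x) := by abel
    simpa only [hsplit, map_add] using hmin n ω w
  have hG : Tendsto (fun x => 3 * ‖S (G udag - G x)‖ ^ 2) (𝓝 udag) (𝓝 0) := by
    have hGc := continuous_of_forall_lipschitz_on_closedBall hGlip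
    simpa using (show Continuous fun x => 3 * ‖S (G udag - G x)‖ ^ 2 by fun_prop).tendsto udag
  have hlim := tendsto_zero_of_forall_le_div_add hdense hG
    (fun n => integral_nonneg fun ω => by positivity) (fun v => 2 * ‖v‖ ^ 2 + 8 * Kc)
    fun v n hn => integral_norm_sq_le_of_minimizes (F := fun w => S (G udag - G (ι w)))
      hindepS hL2 hcentS hKc hn (hmin_split n) (hGint n) v
  refine ⟨hlim, ?_⟩
  obtain ⟨φ, hφ, hae⟩ := exists_strictMono_ae_tendsto_zero_of_tendsto_integral hGint
    (fun _ _ => by positivity) hlim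
  refine ⟨φ, hφ, hae.mono fun ω hω => ?_⟩
  have hSinv := (Se.symm.continuous.tendsto 0).comp (tendsto_zero_of_tendsto_norm_sq hω)
  simpa [← hSe] using hSinv.const_sub (G udag)

/-- Corollary 4.2: E (Hilbert) densely embedded in X (Banach), 𝒢 : X → ℝᴷ
Lipschitz on bounded sets, truth u† ∈ X only. With yⱼ = 𝒢(u†) + ηⱼ for i.i.d.
centered noise with E|C₁^{-1/2}η|² = K and uₙ minimising
Iₙ(u) = ‖u‖_E² + Σ_{j<n}|yⱼ − 𝒢(u)|²_{C₁} over E, one has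
E|𝒢(u†) − 𝒢(uₙ)|²_{C₁} → 0, and hence a subsequence of 𝒢(uₙ) converges to
𝒢(u†) almost surely. -/
theorem stmt12 {E X : Type*} [NormedAddCommGroup E] [InnerProductSpace ℝ E]
    [CompleteSpace E] [TopologicalSpace.SeparableSpace E]
    [NormedAddCommGroup X] [NormedSpace ℝ X] [CompleteSpace X]
    (ι : E →L[ℝ] X) (hinj : Function.Injective ι) (hdense : DenseRange ι)
    {K : ℕ} (G : X → EuclideanSpace ℝ (Fin K))
    (hGlip : ∀ r > 0, ∃ L > 0, ∀ u v : X, ‖u‖ ≤ r → ‖v‖ ≤ r →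
      ‖G u - G v‖ ≤ L * ‖u - v‖)
    (S : EuclideanSpace ℝ (Fin K) →L[ℝ] EuclideanSpace ℝ (Fin K))
    (hS : Function.Bijective S)
    {Ω : Type*} [MeasurableSpace Ω] (P : Measure Ω) [IsProbabilityMeasure P]
    (η : ℕ → Ω → EuclideanSpace ℝ (Fin K))
    (hηmeas : ∀ j, Measurable (η j))
    (hindep : iIndepFun η P)
    (hident : ∀ j, P.map (η j) = P.map (η 0))
    (hcent : ∀ j, (∫ ω, η j ω ∂P) = 0)
    (Kc : ℝ)
    (hKint : ∀ j, Integrable (fun ω => ‖S (η j ω)‖^2) P)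
    (hKc : ∀ j, (∫ ω, ‖S (η j ω)‖^2 ∂P) = Kc)
    (udag : X) (u : ℕ → Ω → E)
    (hmin : ∀ n ω, ∀ w : E,
      ‖u n ω‖^2 + ∑ j ∈ Finset.range n, ‖S (G udag + η j ω - G (ι (u n ω)))‖^2
        ≤ ‖w‖^2 + ∑ j ∈ Finset.range n, ‖S (G udag + η j ω - G (ι w))‖^2)
    (hGint : ∀ n, Integrable (fun ω => ‖S (G udag - G (ι (u n ω)))‖^2) P)
    (huint : ∀ n, Integrable (fun ω => ‖u n ω‖^2) P) :
    Tendsto (fun n => ∫ ω, ‖S (G udag - G (ι (u n ω)))‖^2 ∂P) atTop (𝓝 0) ∧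
    ∃ φ : ℕ → ℕ, StrictMono φ ∧
      ∀ᵐ ω ∂P, Tendsto (fun k => G (ι (u (φ k) ω))) atTop (𝓝 (G udag)) :=
  stmt12_general ι hdense G hGlip S hS P η hηmeas hindep hcent Kc hKint hKc udag u hmin hGint
end

section
/- Let μ₀ be a Gaussian measure on ℝⁿ with density proportional to exp(−½ Σⱼ aⱼxⱼ²), a₁ ≤ a₂ ≤ … ≤ aₙ. Suppose z ∈ ℝⁿ and N ≤ n, A > 0 are such that Σ_{j=1}^{N} aⱼxⱼ² > A² for all x in the ball B(z,δ), and δ is small enough that exp(−¼(a₁+…+a_N)δ²) > ½. Then μ₀(B(z,δ))/μ₀(B(0,δ)) ≤ 2 exp(−A²/4). -/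
/-!
Let `b = T.piecewise (a / 2) a` be `a` with the coefficients `aⱼ`, `j < N`, halved, so that
`exp (-½ Σ aⱼxⱼ²) = exp (-½ Σ bⱼxⱼ²) · exp (-¼ Σ_{j<N} aⱼxⱼ²)`.
On `B(z, δ)` the second factor is at most `exp (-A²/4)`, and on `B(0, δ)` it is at least
`exp (-¼ Σ_{j<N} aⱼδ²) > ½`. In between, Anderson's inequality for the centred Gaussian with
coefficients `b` moves the ball from `z` to `0` without decreasing its mass.

Anderson's inequality holds for any product of functions `gⱼ(xⱼ)` that are nonincreasing in `|xⱼ|`: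
recentre one coordinate at a time; each slice of a ball is an interval `{(t - c)² < R}`, and
reflecting `t ↦ c - t` maps the part of it outside `{t² < R}` onto the part of `{t² < R}` outside
it, moving every point towards `0`.
-/

open MeasureTheory Metric Real Set Function
open scoped BigOperators ENNReal

theorem setLIntegral_sq_sub_lt_le {g : ℝ → ℝ≥0∞} (hg : ∀ u v, |u| ≤ |v| → g v ≤ g u)
    (c R : ℝ) :
    ∫⁻ y in {y | (y - c) ^ 2 < R}, g y ≤ ∫⁻ y in {y | y ^ 2 < R}, g y := by
  set I := {y : ℝ | (y - c) ^ 2 < R}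
  set J := {y : ℝ | y ^ 2 < R}
  have hI : MeasurableSet I := measurableSet_lt (by fun_prop) measurable_const
  have hJ : MeasurableSet J := measurableSet_lt (by fun_prop) measurable_const
  have hσ : MeasurePreserving (fun y : ℝ => c - y) := Measure.measurePreserving_sub_left volume c
  have hswap : (fun y : ℝ => c - y) ⁻¹' (J \ I) = I \ J := by
    ext y; simp only [I, J, mem_preimage, mem_sdiff, mem_ofPred_eq]; ring_nf
  have hcloser : ∀ y ∈ I \ J, g y ≤ g (c - y) := fun y ⟨hyI, hyJ⟩ =>
    hg _ _ (sq_le_sq.1 (by simp only [I, J, mem_ofPred_eq, not_lt] at hyI hyJ; nlinarith))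
  calc ∫⁻ y in I, g y = (∫⁻ y in I ∩ J, g y) + ∫⁻ y in I \ J, g y :=
        (lintegral_inter_add_sdiff g I hJ).symm
    _ ≤ (∫⁻ y in J ∩ I, g y) + ∫⁻ y in I \ J, g (c - y) := by
        rw [inter_comm]
        gcongr 1
        exact setLIntegral_mono' (hI.diff hJ) hcloser
    _ = (∫⁻ y in J ∩ I, g y) + ∫⁻ y in J \ I, g y := by
        rw [← hswap, hσ.setLIntegral_comp_preimage_emb
          (MeasurableEquiv.subLeft c).measurableEmbedding]
    _ = ∫⁻ y in J, g y := lintegral_inter_add_sdiff g J hI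

section Anderson

variable {ι : Type*} [Fintype ι]

theorem measurableSet_sum_sq_sub_lt (R : ℝ) (c : ι → ℝ) :
    MeasurableSet {x : ι → ℝ | ∑ j, (x j - c j) ^ 2 < R} :=
  measurableSet_lt (by fun_prop) measurable_const

theorem EuclideanSpace.toLp_preimage_ball (z : EuclideanSpace ℝ ι) {r : ℝ} (hr : 0 ≤ r) :
    WithLp.toLp 2 ⁻¹' ball z r = {x : ι → ℝ | ∑ j, (x j - z j) ^ 2 < r ^ 2} := by
  ext x
  rw [mem_preimage, mem_ball, EuclideanSpace.dist_eq,
    Real.sqrt_lt (Finset.sum_nonneg fun _ _ => sq_nonneg _) hr]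
  simp [Real.dist_eq, sq_abs]

variable [DecidableEq ι] {g : ι → ℝ → ℝ≥0∞}

theorem indicator_sum_sq_sub_lt_update (R : ℝ) (c x : ι → ℝ) (k : ι) (y : ℝ) :
    {w | ∑ j, (w j - c j) ^ 2 < R}.indicator (fun w => ∏ j, g j (w j)) (update x k y)
      = (∏ j ∈ Finset.univ.erase k, g j (x j)) *
        {t | (t - c k) ^ 2 < R - ∑ j ∈ Finset.univ.erase k, (x j - c j) ^ 2}.indicator (g k) y := by
  have hsum : ∑ j, (update x k y j - c j) ^ 2
      = (y - c k) ^ 2 + ∑ j ∈ Finset.univ.erase k, (x j - c j) ^ 2 := by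
    rw [← Finset.add_sum_erase _ _ (Finset.mem_univ k), update_self]
    congr 1
    exact Finset.sum_congr rfl fun j hj => by rw [update_of_ne (Finset.ne_of_mem_erase hj)]
  have hprod : ∏ j, g j (update x k y j) = g k y * ∏ j ∈ Finset.univ.erase k, g j (x j) := by
    rw [← Finset.mul_prod_erase _ _ (Finset.mem_univ k), update_self]
    congr 1
    exact Finset.prod_congr rfl fun j hj => by rw [update_of_ne (Finset.ne_of_mem_erase hj)]
  simp only [indicator_apply, mem_ofPred_eq, hsum, hprod, lt_sub_iff_add_lt]
  split_ifs <;> simp [mul_comm]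

theorem setLIntegral_sum_sq_sub_lt_le_update (hgm : ∀ j, Measurable (g j))
    (hg : ∀ j u v, |u| ≤ |v| → g j v ≤ g j u) (R : ℝ) (c : ι → ℝ) (k : ι) :
    ∫⁻ x in {x : ι → ℝ | ∑ j, (x j - c j) ^ 2 < R}, ∏ j, g j (x j)
      ≤ ∫⁻ x in {x : ι → ℝ | ∑ j, (x j - update c k 0 j) ^ 2 < R}, ∏ j, g j (x j) := by
  have hmeas : ∀ c : ι → ℝ, Measurable
      ({x : ι → ℝ | ∑ j, (x j - c j) ^ 2 < R}.indicator fun x => ∏ j, g j (x j)) := fun c =>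
    (Finset.measurable_prod _ fun j _ => (hgm j).comp (measurable_pi_apply j)).indicator
      (measurableSet_sum_sq_sub_lt R c)
  rw [← lintegral_indicator (measurableSet_sum_sq_sub_lt R _),
    ← lintegral_indicator (measurableSet_sum_sq_sub_lt R _), volume_pi]
  refine lintegral_le_of_lmarginal_le {k} (hmeas c) (hmeas _) fun x => ?_
  have hrest : ∑ j ∈ Finset.univ.erase k, (x j - update c k 0 j) ^ 2
      = ∑ j ∈ Finset.univ.erase k, (x j - c j) ^ 2 :=
    Finset.sum_congr rfl fun j hj => by rw [update_of_ne (Finset.ne_of_mem_erase hj)]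
  have hslice : ∀ c' S : ℝ, MeasurableSet {t : ℝ | (t - c') ^ 2 < S} := fun _ _ =>
    measurableSet_lt (by fun_prop) measurable_const
  simp only [lmarginal_singleton, indicator_sum_sq_sub_lt_update, hrest, update_self]
  rw [lintegral_const_mul _ ((hgm k).indicator (hslice _ _)),
    lintegral_const_mul _ ((hgm k).indicator (hslice _ _)), lintegral_indicator (hslice _ _),
    lintegral_indicator (hslice _ _)]
  simp only [sub_zero]
  exact mul_le_mul_right (setLIntegral_sq_sub_lt_le (hg k) (c k) _) _

theorem setLIntegral_sum_sq_sub_lt_le (hgm : ∀ j, Measurable (g j))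
    (hg : ∀ j u v, |u| ≤ |v| → g j v ≤ g j u) (R : ℝ) (c : ι → ℝ) :
    ∫⁻ x in {x : ι → ℝ | ∑ j, (x j - c j) ^ 2 < R}, ∏ j, g j (x j)
      ≤ ∫⁻ x in {x : ι → ℝ | ∑ j, x j ^ 2 < R}, ∏ j, g j (x j) := by
  suffices ∀ s : Finset ι, ∫⁻ x in {x : ι → ℝ | ∑ j, (x j - c j) ^ 2 < R}, ∏ j, g j (x j)
      ≤ ∫⁻ x in {x : ι → ℝ | ∑ j, (x j - s.piecewise (0 : ι → ℝ) c j) ^ 2 < R}, ∏ j, g j (x j) by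
    simpa using this Finset.univ
  intro s
  induction s using Finset.induction_on with
  | empty => simp
  | insert k s _ ih =>
    rw [Finset.piecewise_insert]
    exact ih.trans (setLIntegral_sum_sq_sub_lt_le_update hgm hg R _ k)

theorem setLIntegral_ball_prod_le_ball_zero (hgm : ∀ j, Measurable (g j))
    (hg : ∀ j u v, |u| ≤ |v| → g j v ≤ g j u) (z : EuclideanSpace ℝ ι) (r : ℝ) :
    ∫⁻ x in ball z r, ∏ j, g j (x j) ≤ ∫⁻ x in ball (0 : EuclideanSpace ℝ ι) r, ∏ j, g j (x j) := by
  rcases lt_or_ge r 0 with hr | hr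
  · simp [ball_eq_empty.2 hr.le]
  have hcoord := fun w : EuclideanSpace ℝ ι =>
    ((PiLp.volume_preserving_toLp ι).setLIntegral_comp_preimage_emb
      (MeasurableEquiv.toLp 2 (ι → ℝ)).measurableEmbedding
      (fun x : EuclideanSpace ℝ ι => ∏ j, g j (x j)) (ball w r)).symm
  rw [hcoord, hcoord, EuclideanSpace.toLp_preimage_ball _ hr,
    EuclideanSpace.toLp_preimage_ball _ hr]
  simpa using setLIntegral_sum_sq_sub_lt_le hgm hg (r ^ 2) (fun j => z j)

end Anderson

section Gaussian

variable {ι : Type*} [Fintype ι]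

theorem ofReal_exp_neg_half_sum_mul_sq (b x : ι → ℝ) :
    ENNReal.ofReal (exp (-(1 / 2) * ∑ j, b j * x j ^ 2))
      = ∏ j, ENNReal.ofReal (exp (-(1 / 2) * (b j * x j ^ 2))) := by
  rw [← ENNReal.ofReal_prod_of_nonneg fun j _ => (exp_pos _).le, ← Real.exp_sum, Finset.mul_sum]

theorem setLIntegral_ball_gaussian_le_ball_zero [DecidableEq ι] {b : ι → ℝ} (hb : ∀ j, 0 ≤ b j)
    (z : EuclideanSpace ℝ ι) (r : ℝ) :
    ∫⁻ x in ball z r, ENNReal.ofReal (exp (-(1 / 2) * ∑ j, b j * x j ^ 2))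
      ≤ ∫⁻ x in ball (0 : EuclideanSpace ℝ ι) r,
          ENNReal.ofReal (exp (-(1 / 2) * ∑ j, b j * x j ^ 2)) := by
  simp_rw [ofReal_exp_neg_half_sum_mul_sq]
  refine setLIntegral_ball_prod_le_ball_zero
    (g := fun j u => ENNReal.ofReal (exp (-(1 / 2) * (b j * u ^ 2)))) (fun j => by fun_prop)
    (fun j u v huv => ?_) z r
  have := mul_le_mul_of_nonneg_left (sq_le_sq.2 huv) (hb j)
  exact ENNReal.ofReal_le_ofReal (exp_le_exp.2 (by linarith))

theorem sum_mul_sq_eq_sum_piecewise_add [DecidableEq ι] (T : Finset ι) (a x : ι → ℝ) :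
    ∑ j, a j * x j ^ 2
      = ∑ j, T.piecewise (a / 2) a j * x j ^ 2 + 1 / 2 * ∑ j ∈ T, a j * x j ^ 2 := by
  rw [Finset.mul_sum, ← Fintype.sum_ite_mem T, ← Finset.sum_add_distrib]
  refine Finset.sum_congr rfl fun j _ => ?_
  simp only [Finset.piecewise, Pi.div_apply, Pi.ofNat_apply]
  split_ifs <;> ring

theorem exp_neg_half_sum_mul_sq_le_of_lt [DecidableEq ι] {T : Finset ι} {a x : ι → ℝ} {A : ℝ}
    (h : A ^ 2 < ∑ j ∈ T, a j * x j ^ 2) :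
    exp (-(1 / 2) * ∑ j, a j * x j ^ 2)
      ≤ exp (-A ^ 2 / 4) * exp (-(1 / 2) * ∑ j, T.piecewise (a / 2) a j * x j ^ 2) := by
  rw [← exp_add, sum_mul_sq_eq_sum_piecewise_add T]
  exact exp_le_exp.2 (by linarith)

theorem exp_neg_half_sum_piecewise_le_two_mul [DecidableEq ι] {T : Finset ι} {a x : ι → ℝ}
    (h : 1 / 2 < exp (-(1 / 4) * ∑ j ∈ T, a j * x j ^ 2)) :
    exp (-(1 / 2) * ∑ j, T.piecewise (a / 2) a j * x j ^ 2)
      ≤ 2 * exp (-(1 / 2) * ∑ j, a j * x j ^ 2) := by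
  have htwo : exp (1 / 4 * ∑ j ∈ T, a j * x j ^ 2) < 2 := by
    rw [← inv_inv (exp _), ← exp_neg, inv_lt_comm₀ (exp_pos _) two_pos, neg_mul_eq_neg_mul]
    simpa using h
  calc exp (-(1 / 2) * ∑ j, T.piecewise (a / 2) a j * x j ^ 2)
      = exp (1 / 4 * ∑ j ∈ T, a j * x j ^ 2) * exp (-(1 / 2) * ∑ j, a j * x j ^ 2) := by
        rw [sum_mul_sq_eq_sum_piecewise_add T a x, ← exp_add]; ring_nf
    _ ≤ 2 * exp (-(1 / 2) * ∑ j, a j * x j ^ 2) := by gcongr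

theorem sum_mul_sq_le_of_mem_ball_zero {a : ι → ℝ} (ha : ∀ j, 0 ≤ a j) (T : Finset ι)
    {δ : ℝ} {x : EuclideanSpace ℝ ι} (hx : x ∈ ball 0 δ) :
    ∑ j ∈ T, a j * x j ^ 2 ≤ (∑ j ∈ T, a j) * δ ^ 2 := by
  rw [Finset.sum_mul]
  refine Finset.sum_le_sum fun j _ => mul_le_mul_of_nonneg_left ?_ (ha j)
  calc x j ^ 2 = ‖x j‖ ^ 2 := (sq_abs _).symm
    _ ≤ ‖x‖ ^ 2 := by gcongr; exact PiLp.norm_apply_le x j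
    _ ≤ δ ^ 2 := by gcongr; exact (mem_ball_zero_iff.1 hx).le

end Gaussian

theorem setLIntegral_le_mul_of_le_of_le {α : Type*} [MeasurableSpace α] {μ : Measure α}
    {s t : Set α} (hs : MeasurableSet s) (ht : MeasurableSet t) {f h : α → ℝ≥0∞} {c d : ℝ≥0∞}
    (hc : c ≠ ⊤) (hd : d ≠ ⊤) (hfh : ∀ x ∈ s, f x ≤ c * h x)
    (hst : ∫⁻ x in s, h x ∂μ ≤ ∫⁻ x in t, h x ∂μ) (hhf : ∀ x ∈ t, h x ≤ d * f x) :
    ∫⁻ x in s, f x ∂μ ≤ c * d * ∫⁻ x in t, f x ∂μ :=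
  calc ∫⁻ x in s, f x ∂μ ≤ ∫⁻ x in s, c * h x ∂μ := setLIntegral_mono' hs hfh
    _ = c * ∫⁻ x in s, h x ∂μ := lintegral_const_mul' c h hc
    _ ≤ c * ∫⁻ x in t, d * f x ∂μ := mul_le_mul_right (hst.trans (setLIntegral_mono' ht hhf)) c
    _ = c * d * ∫⁻ x in t, f x ∂μ := by rw [lintegral_const_mul' d f hd, mul_assoc]

-- `y = ⊤` is allowed: then the quotient is the junk value `x.toReal / 0 = 0`.
theorem ENNReal.toReal_div_toReal_le_of_le_ofReal_mul {x y : ℝ≥0∞} {c : ℝ} (hc : 0 ≤ c)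
    (h : x ≤ ENNReal.ofReal c * y) : x.toReal / y.toReal ≤ c := by
  rcases eq_or_ne y ⊤ with rfl | hy
  · simp [hc]
  refine div_le_of_le_mul₀ ENNReal.toReal_nonneg hc ?_
  simpa [ENNReal.toReal_mul, hc] using
    ENNReal.toReal_mono (ENNReal.mul_ne_top ENNReal.ofReal_ne_top hy) h

theorem stmt14_general (n N : ℕ) (a : Fin n → ℝ) (hpos : ∀ j, 0 < a j)
    (A δ : ℝ)
    (z : EuclideanSpace ℝ (Fin n))
    (hball : ∀ x ∈ ball z δ,
      A^2 < ∑ j ∈ Finset.univ.filter (fun j : Fin n => (j : ℕ) < N),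
        a j * (x j)^2)
    (hsmall : (1:ℝ)/2 < exp (-(1/4) *
      (∑ j ∈ Finset.univ.filter (fun j : Fin n => (j : ℕ) < N), a j) * δ^2)) :
    (∫ x in ball z δ, exp (-(1/2) * ∑ j, a j * (x j)^2)) /
      (∫ x in ball (0 : EuclideanSpace ℝ (Fin n)) δ,
        exp (-(1/2) * ∑ j, a j * (x j)^2))
    ≤ 2 * exp (-A^2 / 4) := by
  set T := Finset.univ.filter (fun j : Fin n => (j : ℕ) < N)
  have ha : ∀ j, 0 ≤ a j := fun j => (hpos j).le
  have hb : ∀ j, 0 ≤ T.piecewise (a / 2) a j :=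
    T.le_piecewise_of_le_of_le (fun j => div_nonneg (ha j) zero_le_two) ha
  have hnum : ∀ x ∈ ball z δ, ENNReal.ofReal (exp (-(1 / 2) * ∑ j, a j * x j ^ 2))
      ≤ ENNReal.ofReal (exp (-A ^ 2 / 4)) *
          ENNReal.ofReal (exp (-(1 / 2) * ∑ j, T.piecewise (a / 2) a j * x j ^ 2)) := fun x hx => by
    rw [← ENNReal.ofReal_mul (exp_pos _).le]
    exact ENNReal.ofReal_le_ofReal (exp_neg_half_sum_mul_sq_le_of_lt (hball x hx))
  have hden : ∀ x ∈ ball (0 : EuclideanSpace ℝ (Fin n)) δ,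
      ENNReal.ofReal (exp (-(1 / 2) * ∑ j, T.piecewise (a / 2) a j * x j ^ 2))
        ≤ ENNReal.ofReal 2 * ENNReal.ofReal (exp (-(1 / 2) * ∑ j, a j * x j ^ 2)) := fun x hx => by
    have hq := sum_mul_sq_le_of_mem_ball_zero ha T hx
    rw [← ENNReal.ofReal_mul zero_le_two]
    exact ENNReal.ofReal_le_ofReal (exp_neg_half_sum_piecewise_le_two_mul
      (hsmall.trans_le (exp_le_exp.2 (by linarith))))
  have key := setLIntegral_le_mul_of_le_of_le measurableSet_ball measurableSet_ball
    ENNReal.ofReal_ne_top ENNReal.ofReal_ne_top hnum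
    (setLIntegral_ball_gaussian_le_ball_zero hb z δ) hden
  rw [← ENNReal.ofReal_mul (exp_pos _).le, mul_comm (exp _)] at key
  rw [integral_eq_lintegral_of_nonneg_ae (.of_forall fun _ => (exp_pos _).le) (by fun_prop),
    integral_eq_lintegral_of_nonneg_ae (.of_forall fun _ => (exp_pos _).le) (by fun_prop)]
  exact ENNReal.toReal_div_toReal_le_of_le_ofReal_mul (by positivity) key

/-- Finite-dimensional estimate at the core of Lemma 3.8: for the Gaussian with
density proportional to exp(−½Σⱼaⱼxⱼ²) on ℝⁿ (a₁ ≤ … ≤ aₙ), if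
Σ_{j<N} aⱼxⱼ² > A² on the ball B(z,δ) and exp(−¼Σ_{j<N}aⱼδ²) > ½, then
μ₀(B(z,δ))/μ₀(B(0,δ)) ≤ 2 exp(−A²/4). -/
theorem stmt14 (n N : ℕ) (hN : N ≤ n) (a : Fin n → ℝ) (hpos : ∀ j, 0 < a j)
    (hmono : Monotone a) (A δ : ℝ) (hA : 0 < A) (hδ : 0 < δ)
    (z : EuclideanSpace ℝ (Fin n))
    (hball : ∀ x ∈ ball z δ,
      A^2 < ∑ j ∈ Finset.univ.filter (fun j : Fin n => (j : ℕ) < N),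
        a j * (x j)^2)
    (hsmall : (1:ℝ)/2 < exp (-(1/4) *
      (∑ j ∈ Finset.univ.filter (fun j : Fin n => (j : ℕ) < N), a j) * δ^2)) :
    (∫ x in ball z δ, exp (-(1/2) * ∑ j, a j * (x j)^2)) /
      (∫ x in ball (0 : EuclideanSpace ℝ (Fin n)) δ,
        exp (-(1/2) * ∑ j, a j * (x j)^2))
    ≤ 2 * exp (-A^2 / 4) :=
  stmt14_general n N a hpos A δ z hball hsmall
end
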